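/- arXiv:2002.05580 — 2 statements merged into one kernel-verified Lean document; each statement's English description precedes it below -/
import Mathlib

section
/- If a straight-line drawing Γ of a connected graph G on n ≥ 2 vertices has the property that no two vertices share the same x-coordinate, and Γ has spanning ratio 1, then ordering the vertices v₁, …, vₙ by increasing x-coordinate, the edge vᵢvᵢ₊₁ belongs to G for every i = 1, …, n−1. -/
/-! The first step `u → w` of a walk from `u` to `v` whose length is `dist (ρ u) (ρ v)` satisfies
`‖uw‖ + ‖wv‖ = ‖uv‖`, so `ρ w` lies on the segment from `ρ u` to `ρ v` and its x-coordinate lies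
between theirs. For x-consecutive `u, v` this forces `w = v`, as `w ≠ u`. -/

noncomputable def wlen {V : Type*} {G : SimpleGraph V} (ρ : V → EuclideanSpace ℝ (Fin 2)) :
    ∀ {u v : V}, G.Walk u v → ℝ
  | _, _, SimpleGraph.Walk.nil => 0
  | u, _, SimpleGraph.Walk.cons (v := b) _ p => dist (ρ u) (ρ b) + wlen ρ p

section

variable {V : Type*} {G : SimpleGraph V} (ρ : V → EuclideanSpace ℝ (Fin 2))

lemma dist_le_wlen {u v : V} (p : G.Walk u v) : dist (ρ u) (ρ v) ≤ wlen ρ p := by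
  induction p with
  | nil => simp [wlen]
  | @cons a b c _ q ih =>
    simp only [wlen]
    linarith [dist_triangle (ρ a) (ρ b) (ρ c)]

lemma exists_adj_wbtw_of_wlen_eq_dist {u v : V} (huv : u ≠ v) (p : G.Walk u v)
    (hp : wlen ρ p = dist (ρ u) (ρ v)) : ∃ w, G.Adj u w ∧ Wbtw ℝ (ρ u) (ρ w) (ρ v) := by
  cases p with
  | nil => exact absurd rfl huv
  | cons h q =>
    refine ⟨_, h, dist_add_dist_eq_iff.mp (le_antisymm ?_ (dist_triangle _ _ _))⟩
    have := dist_le_wlen ρ q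
    simp only [wlen] at hp
    linarith

end

lemma Wbtw.apply_mem_Icc {ι : Type*} {x y z : EuclideanSpace ℝ ι} (h : Wbtw ℝ x y z) (i : ι)
    (hxz : x i ≤ z i) : y i ∈ Set.Icc (x i) (z i) := by
  have : y i ∈ segment ℝ (x i) (z i) := by
    simpa [Wbtw, affineSegment_eq_segment] using
      h.map (EuclideanSpace.proj i : EuclideanSpace ℝ ι →L[ℝ] ℝ).toLinearMap.toAffineMap
  rwa [segment_eq_Icc hxz] at this

theorem consecutive_by_x_adjacent_general
    {V : Type*} (G : SimpleGraph V)
    {n : ℕ} (f : Fin n ≃ V)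
    (ρ : V → EuclideanSpace ℝ (Fin 2))
    (hx : StrictMono (fun i : Fin n => ρ (f i) 0))
    (hspan : ∀ u v : V, ∃ p : G.Walk u v, wlen ρ p = dist (ρ u) (ρ v)) :
    ∀ (i : ℕ) (hi : i + 1 < n),
      G.Adj (f ⟨i, Nat.lt_of_succ_lt hi⟩) (f ⟨i + 1, hi⟩) := by
  intro i hi
  set a : Fin n := ⟨i, Nat.lt_of_succ_lt hi⟩
  set b : Fin n := ⟨i + 1, hi⟩
  have hab : a ⋖ b := Fin.covBy_iff.mpr (Order.covBy_add_one i)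
  obtain ⟨p, hp⟩ := hspan (f a) (f b)
  obtain ⟨w, hadj, hw⟩ := exists_adj_wbtw_of_wlen_eq_dist ρ (f.injective.ne hab.ne) p hp
  have hc := hw.apply_mem_Icc 0 (hx hab.lt).le
  rw [← f.apply_symm_apply w] at hadj hc
  rcases hab.eq_or_eq (hx.le_iff_le.mp hc.1) (hx.le_iff_le.mp hc.2) with h | h
  · rw [h] at hadj
    exact absurd hadj G.irrefl
  · rwa [h] at hadj

/-- If a straight-line drawing of a connected graph on `n ≥ 2` vertices has pairwise distinct
x-coordinates and spanning ratio 1, then consecutive vertices in the order of increasing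
x-coordinate are adjacent. -/
theorem consecutive_by_x_adjacent
    {V : Type*} [Fintype V] (G : SimpleGraph V) (hG : G.Connected)
    {n : ℕ} (hn : 2 ≤ n) (f : Fin n ≃ V)
    (ρ : V → EuclideanSpace ℝ (Fin 2)) (hinj : Function.Injective ρ)
    (hx : StrictMono (fun i : Fin n => ρ (f i) 0))
    (hspan : ∀ u v : V, ∃ p : G.Walk u v, wlen ρ p = dist (ρ u) (ρ v)) :
    ∀ (i : ℕ) (hi : i + 1 < n),
      G.Adj (f ⟨i, Nat.lt_of_succ_lt hi⟩) (f ⟨i + 1, hi⟩) :=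
  consecutive_by_x_adjacent_general G f ρ hx hspan
end

section
/- For every ε > 0, every finite connected graph G admits a straight-line drawing in the plane in which no three vertices are collinear and whose spanning ratio is strictly less than 1 + ε. -/
open SimpleGraph (Walk)

section

variable {V : Type*}

section WalkLength

variable {G : SimpleGraph V} (ρ : V → EuclideanSpace ℝ (Fin 2))

@[simp] lemma wlen_nil {u : V} : wlen ρ (Walk.nil : G.Walk u u) = 0 := rfl

@[simp] lemma wlen_cons {u v w : V} (h : G.Adj u v) (p : G.Walk v w) :
    wlen ρ (Walk.cons h p) = dist (ρ u) (ρ v) + wlen ρ p := rfl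

lemma wlen_append {u v w : V} (p : G.Walk u v) (q : G.Walk v w) :
    wlen ρ (p.append q) = wlen ρ p + wlen ρ q := by
  induction p with
  | nil => simp
  | cons h p ih => simp [ih, add_assoc]

lemma wlen_reverse {u v : V} (p : G.Walk u v) : wlen ρ p.reverse = wlen ρ p := by
  induction p with
  | nil => rfl
  | cons h p ih => simpa [wlen_append, ih, add_comm] using dist_comm _ _

end WalkLength

lemma List.idxOf_getElem_le {α : Type*} [DecidableEq α] (l : List α) (i : ℕ) (hi : i < l.length) :
    l.idxOf l[i] ≤ i :=
  not_lt.1 fun h => by simpa using List.not_of_lt_findIdx h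

lemma List.IsChain.exists_rel_idxOf_lt {α : Type*} [DecidableEq α] {R : α → α → Prop}
    {l : List α} (hl : l.IsChain R) {v : α} (hv : v ∈ l) (h0 : l.idxOf v ≠ 0) :
    ∃ u, R u v ∧ l.idxOf u < l.idxOf v := by
  obtain ⟨j, hj⟩ := Nat.exists_eq_add_one_of_ne_zero h0
  have hlt : j + 1 < l.length := hj ▸ List.idxOf_lt_length_iff.2 hv
  refine ⟨l[j], ?_, hj ▸ (l.idxOf_getElem_le j (by omega)).trans_lt j.lt_add_one⟩
  simpa only [← hj, List.getElem_idxOf] using hl.getElem j hlt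

lemma SimpleGraph.Preconnected.exists_walk_forall_mem_support {G : SimpleGraph V}
    (hG : G.Preconnected) (a : V) (l : List V) :
    ∃ (b : V) (w : G.Walk a b), ∀ v ∈ l, v ∈ w.support := by
  induction l with
  | nil => exact ⟨a, .nil, by simp⟩
  | cons x l ih =>
    obtain ⟨b, w, hw⟩ := ih
    refine ⟨x, w.append (hG b x).some, ?_⟩
    simp only [List.mem_cons, forall_eq_or_imp, Walk.mem_support_append_iff, Walk.end_mem_support,
      or_true, true_and]
    exact fun v hv => .inl (hw v hv)

lemma SimpleGraph.Connected.exists_injective_forall_exists_adj_lt [Finite V] {G : SimpleGraph V}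
    (hG : G.Connected) :
    ∃ (a : V) (idx : V → ℕ), Function.Injective idx ∧ ∀ v ≠ a, ∃ u, G.Adj u v ∧ idx u < idx v := by
  classical
  have := Fintype.ofFinite V
  obtain ⟨a⟩ := hG.nonempty
  obtain ⟨b, w, hw⟩ := hG.preconnected.exists_walk_forall_mem_support a Finset.univ.toList
  have hmem : ∀ v, v ∈ w.support := fun v => hw v (by simp)
  refine ⟨a, (w.support.idxOf ·), fun u v h => (List.idxOf_inj (hmem u)).1 h, fun v hv => ?_⟩
  refine w.isChain_adj_support.exists_rel_idxOf_lt (hmem v) ?_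
  rw [← w.cons_tail_support, List.idxOf_cons_ne _ (Ne.symm hv)]
  exact Nat.succ_ne_zero _

noncomputable def parabolaPoint (δ t : ℝ) : EuclideanSpace ℝ (Fin 2) := !₂[t, δ * t ^ 2]

lemma dist_parabolaPoint (δ s t : ℝ) :
    dist (parabolaPoint δ s) (parabolaPoint δ t) = √(1 + (δ * (s + t)) ^ 2) * |s - t| := by
  rw [EuclideanSpace.dist_eq, Fin.sum_univ_two, ← Real.sqrt_sq_eq_abs,
    ← Real.sqrt_mul (by positivity)]
  congr 1
  simp only [parabolaPoint, Real.dist_eq, sq_abs, Matrix.cons_val_zero, Matrix.cons_val_one,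
    Matrix.cons_val_fin_one]
  ring

lemma abs_sub_le_dist_parabolaPoint (δ s t : ℝ) :
    |s - t| ≤ dist (parabolaPoint δ s) (parabolaPoint δ t) := by
  rw [dist_parabolaPoint]
  exact le_mul_of_one_le_left (abs_nonneg _) (Real.one_le_sqrt.2 (by nlinarith))

lemma dist_parabolaPoint_le (δ s t : ℝ) :
    dist (parabolaPoint δ s) (parabolaPoint δ t) ≤ (1 + |δ * (s + t)|) * |s - t| := by
  rw [dist_parabolaPoint]
  refine mul_le_mul_of_nonneg_right (Real.sqrt_le_iff.2 ⟨by positivity, ?_⟩) (abs_nonneg _)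
  nlinarith [sq_abs (δ * (s + t)), abs_nonneg (δ * (s + t))]

lemma dist_parabolaPoint_le_of_le {δ s t B : ℝ} (hδ : 0 ≤ δ) (hs : 0 ≤ s) (hst : s ≤ t)
    (htB : t ≤ B) : dist (parabolaPoint δ t) (parabolaPoint δ s) ≤ (1 + 2 * δ * B) * t := by
  have hB : 0 ≤ 1 + 2 * δ * B := by nlinarith
  calc dist (parabolaPoint δ t) (parabolaPoint δ s) ≤ (1 + |δ * (t + s)|) * |t - s| :=
        dist_parabolaPoint_le δ t s
    _ ≤ (1 + 2 * δ * B) * t := by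
      rw [abs_of_nonneg (mul_nonneg hδ (by linarith)), abs_of_nonneg (by linarith)]
      nlinarith [mul_le_mul_of_nonneg_left (by linarith : t + s ≤ 2 * B) hδ]

lemma parabolaPoint_injective (δ : ℝ) : Function.Injective (parabolaPoint δ) := fun s t h => by
  simpa [parabolaPoint] using congrArg (· 0) h

lemma not_collinear_parabolaPoint {δ r s t : ℝ} (hδ : δ ≠ 0) (hrs : r ≠ s) (hrt : r ≠ t)
    (hst : s ≠ t) :
    ¬ Collinear ℝ ({parabolaPoint δ r, parabolaPoint δ s, parabolaPoint δ t} : Set _) := by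
  rw [collinear_iff_of_mem (Set.mem_insert _ _)]
  rintro ⟨v, hv⟩
  obtain ⟨a, ha⟩ := hv (parabolaPoint δ s) (by simp)
  obtain ⟨b, hb⟩ := hv (parabolaPoint δ t) (by simp)
  have ha0 := congrArg (· 0) ha
  have ha1 := congrArg (· 1) ha
  have hb0 := congrArg (· 0) hb
  have hb1 := congrArg (· 1) hb
  simp only [parabolaPoint, vadd_eq_add, PiLp.add_apply, PiLp.smul_apply, smul_eq_mul,
    Matrix.cons_val_zero, Matrix.cons_val_one, Matrix.cons_val_fin_one] at ha0 ha1 hb0 hb1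
  -- the determinant of the two chords `(a v₀, a v₁)` and `(b v₀, b v₁)`
  have : δ * (s - r) * (t - r) * (t - s) = 0 := by
    linear_combination (s - r) * hb1 - (t - r) * ha1 + b * v 1 * ha0 - a * v 1 * hb0
  simp [hδ, sub_eq_zero, hrs.symm, hrt.symm, hst.symm] at this

section Spanning

variable {G : SimpleGraph V} {ρ : V → EuclideanSpace ℝ (Fin 2)} {a : V} {idx : V → ℕ} {M L : ℝ}

lemma exists_walk_wlen_le_of_forall_exists_adj_lt (hM : 1 < M) (hL : 0 ≤ L)
    (hparent : ∀ v ≠ a, ∃ u, G.Adj u v ∧ idx u < idx v)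
    (hdist : ∀ u v, idx u < idx v → dist (ρ v) (ρ u) ≤ L * M ^ idx v) (v : V) :
    ∃ p : G.Walk v a, wlen ρ p ≤ L * M / (M - 1) * M ^ idx v := by
  have hM1 : 0 < M - 1 := sub_pos.2 hM
  induction hn : idx v using Nat.strong_induction_on generalizing v with
  | _ n ih =>
  by_cases hva : v = a
  · subst hva
    exact ⟨.nil, by rw [wlen_nil]; have := hM1.le; positivity⟩
  obtain ⟨u, huv, hlt⟩ := hparent v hva
  obtain ⟨q, hq⟩ := ih (idx u) (hn ▸ hlt) u rfl
  have hpow : M * M ^ idx u ≤ M ^ n := by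
    rw [← pow_succ']; exact pow_le_pow_right₀ hM.le (hn ▸ hlt)
  refine ⟨.cons huv.symm q, ?_⟩
  calc wlen ρ (.cons huv.symm q) = dist (ρ v) (ρ u) + wlen ρ q := rfl
    _ ≤ L * M ^ n + L * M / (M - 1) * M ^ idx u := add_le_add (hn ▸ hdist u v hlt) hq
    _ ≤ L * M ^ n + L / (M - 1) * M ^ n := by
      rw [mul_div_right_comm, mul_assoc _ M]; gcongr
    _ = L * M / (M - 1) * M ^ n := by field_simp; ring

lemma exists_walk_wlen_lt_mul_dist {ε : ℝ} (hM : 1 < M) (hL : 0 ≤ L)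
    (hML : L * M * (M + 1) < (1 + ε) * (M - 1) ^ 2)
    (hparent : ∀ v ≠ a, ∃ u, G.Adj u v ∧ idx u < idx v) (hinj : Function.Injective idx)
    (hup : ∀ u v, idx u < idx v → dist (ρ v) (ρ u) ≤ L * M ^ idx v)
    (hlow : ∀ u v, idx u < idx v → M ^ idx v - M ^ idx u ≤ dist (ρ u) (ρ v))
    {u v : V} (huv : u ≠ v) :
    ∃ p : G.Walk u v, wlen ρ p < (1 + ε) * dist (ρ u) (ρ v) := by
  wlog hlt : idx u < idx v generalizing u v
  · obtain ⟨p, hp⟩ := this huv.symm ((Nat.lt_or_gt_of_ne (hinj.ne huv)).resolve_left hlt)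
    exact ⟨p.reverse, by rwa [wlen_reverse, dist_comm]⟩
  obtain ⟨p, hp⟩ := exists_walk_wlen_le_of_forall_exists_adj_lt hM hL hparent hup u
  obtain ⟨q, hq⟩ := exists_walk_wlen_le_of_forall_exists_adj_lt hM hL hparent hup v
  refine ⟨p.append q.reverse, ?_⟩
  have hM1 : 0 < M - 1 := sub_pos.2 hM
  have hx : 0 < M ^ idx u := pow_pos (by linarith) _
  have hxy : M * M ^ idx u ≤ M ^ idx v := by
    rw [← pow_succ']; exact pow_le_pow_right₀ hM.le hlt
  have hε : 0 < 1 + ε := by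
    by_contra! h
    nlinarith [mul_nonneg (mul_nonneg hL (by linarith : (0 : ℝ) ≤ M))
      (by linarith : (0 : ℝ) ≤ M + 1)]
  have key : L * M * (M ^ idx u + M ^ idx v) < (1 + ε) * (M - 1) * (M ^ idx v - M ^ idx u) := by
    refine lt_of_mul_lt_mul_left ?_ (by linarith : (0 : ℝ) ≤ M)
    calc M * (L * M * (M ^ idx u + M ^ idx v)) ≤ L * M * (M + 1) * M ^ idx v := by
          nlinarith [mul_nonneg hL (by linarith : (0 : ℝ) ≤ M)]
      _ < (1 + ε) * (M - 1) ^ 2 * M ^ idx v := by gcongr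
      _ ≤ M * ((1 + ε) * (M - 1) * (M ^ idx v - M ^ idx u)) := by
          nlinarith [mul_pos hε hM1]
  calc wlen ρ (p.append q.reverse) = wlen ρ p + wlen ρ q := by rw [wlen_append, wlen_reverse]
    _ ≤ L * M / (M - 1) * (M ^ idx u + M ^ idx v) := by linarith
    _ < (1 + ε) * (M ^ idx v - M ^ idx u) := by
      rw [div_mul_eq_mul_div, div_lt_iff₀ hM1]; linarith
    _ ≤ (1 + ε) * dist (ρ u) (ρ v) := by gcongr; exact hlow u v hlt

end Spanning

end

/- In units of the larger power `Mʲ`, the route through the root is at most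
`(1 + η) · M / (M - 1) · (1 + 1/M)` and the distance at least `1 - 1/M`. -/
lemma exists_spanning_parameters {ε : ℝ} (hε : 0 < ε) :
    ∃ M η : ℝ, 1 < M ∧ 0 < η ∧ (1 + η) * M * (M + 1) < (1 + ε) * (M - 1) ^ 2 := by
  have hs : 0 < 10 / ε := by positivity
  refine ⟨3 + 10 / ε, ε / 4, by linarith, by positivity, ?_⟩
  have hεs : ε * (10 / ε) = 10 := by field_simp
  nlinarith

/-- For every `ε > 0`, every finite connected graph admits a straight-line drawing with no
three vertices collinear and spanning ratio strictly less than `1 + ε`. -/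
theorem connected_graph_proper_drawing_spanning_ratio_lt
    {V : Type*} [Fintype V] (G : SimpleGraph V) (hG : G.Connected)
    (ε : ℝ) (hε : 0 < ε) :
    ∃ ρ : V → EuclideanSpace ℝ (Fin 2), Function.Injective ρ ∧
      (∀ u v w : V, u ≠ v → u ≠ w → v ≠ w → ¬ Collinear ℝ ({ρ u, ρ v, ρ w} : Set _)) ∧
      ∀ u v : V, u ≠ v →
        ∃ p : G.Walk u v, wlen ρ p < (1 + ε) * dist (ρ u) (ρ v) := by
  obtain ⟨a, idx, hinj, hparent⟩ := hG.exists_injective_forall_exists_adj_lt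
  obtain ⟨M, η, hM, hη, hMη⟩ := exists_spanning_parameters hε
  obtain ⟨n, hn⟩ := (Set.finite_range idx).bddAbove
  have hpow : StrictMono (M ^ · : ℕ → ℝ) := pow_right_strictMono₀ hM
  have hpos : ∀ k : ℕ, 0 < M ^ k := fun k => pow_pos (by linarith) k
  obtain ⟨δ, hδ, h2δ⟩ : ∃ δ : ℝ, 0 < δ ∧ 2 * δ * M ^ n = η :=
    ⟨η / (2 * M ^ n), by have := hpos n; positivity, by field_simp [(hpos n).ne']⟩
  have hc : Function.Injective fun v => M ^ idx v := hpow.injective.comp hinj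
  refine ⟨fun v => parabolaPoint δ (M ^ idx v), (parabolaPoint_injective δ).comp hc,
    fun u v w huv huw hvw =>
      not_collinear_parabolaPoint hδ.ne' (hc.ne huv) (hc.ne huw) (hc.ne hvw),
    fun u v huv => exists_walk_wlen_lt_mul_dist hM (by linarith) hMη hparent hinj ?_ ?_ huv⟩
  · intro u v hlt
    exact h2δ ▸ dist_parabolaPoint_le_of_le hδ.le (hpos _).le (hpow hlt).le
      (hpow.monotone (hn ⟨v, rfl⟩))
  · intro u v hlt
    exact (le_abs_self _).trans (abs_sub_comm (M ^ idx u) _ ▸ abs_sub_le_dist_parabolaPoint δ _ _)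
end
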